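/- Let V be a unital multiplicative partial isometry on a finite dimensional Hilbert space H, with two-sided unit elements 𝟙 = λ(ε̂) ∈ A and 𝟙̂ = ρ(ε) ∈ Â for the right and left legs. Then Δ(𝟙) = VV* and Δ̂(𝟙̂) = V*V, where Δ(X) = V(X⊗1)V* and Δ̂(X) = V*(1⊗X)V. -/

import Mathlib

/-
The identity `W₁₂* W₂₃ W₁₂ = W₁₃ W₂₃` on `H ⊗ H ⊗ H` follows from the pentagon equation, the
first auxiliary equation and `V V* V = V`. Slicing its third leg by `ε` turns the left side into
`Δ̂(𝟙̂)`, and slicing the first leg of the right side by `ε̂` gives `ρ(ε)` back, because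
`(1 ⊗ 𝟙) V = V`; so `λ_{ε̂}(Δ̂(𝟙̂)) = 𝟙̂`, and multiplying by `𝟙` on the right yields `𝟙̂ 𝟙 = 𝟙̂`.
The mirror argument with `W₂₃ W₁₂ W₂₃* = W₁₂ W₁₃` yields `𝟙̂ 𝟙 = 𝟙`, hence `𝟙 = 𝟙̂`, and then
`Δ(𝟙) = V (𝟙̂ ⊗ 1) V* = V V*` and `Δ̂(𝟙̂) = V* (1 ⊗ 𝟙) V = V* V`.
-/


open Matrix

namespace MPIpaper

variable {n : Type*} [Fintype n] [DecidableEq n]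

noncomputable section

/-- `W₁₂ = W ⊗ 1` on `H ⊗ H ⊗ H`. -/
def leg12 (V : Matrix (n × n) (n × n) ℂ) : Matrix (n × n × n) (n × n × n) ℂ :=
  Matrix.of fun p q => V (p.1, p.2.1) (q.1, q.2.1) * (if p.2.2 = q.2.2 then (1 : ℂ) else 0)

/-- `W₂₃ = 1 ⊗ W` on `H ⊗ H ⊗ H`. -/
def leg23 (V : Matrix (n × n) (n × n) ℂ) : Matrix (n × n × n) (n × n × n) ℂ :=
  Matrix.of fun p q => (if p.1 = q.1 then (1 : ℂ) else 0) * V p.2 q.2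

/-- `W₁₃ = (1⊗Σ)(W⊗1)(1⊗Σ)` on `H ⊗ H ⊗ H`. -/
def leg13 (V : Matrix (n × n) (n × n) ℂ) : Matrix (n × n × n) (n × n × n) ℂ :=
  Matrix.of fun p q => V (p.1, p.2.2) (q.1, q.2.2) * (if p.2.1 = q.2.1 then (1 : ℂ) else 0)

/-- A multiplicative partial isometry: `VV*V = V`, the pentagon equation, and the
three auxiliary (hexagon-type) equations. -/
def IsMPI (V : Matrix (n × n) (n × n) ℂ) : Prop :=
  V * Vᴴ * V = V ∧
  leg23 V * leg12 V = leg12 V * leg13 V * leg23 V ∧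
  leg13 V * leg23 V * (leg23 V)ᴴ = (leg12 V)ᴴ * leg12 V * leg13 V ∧
  leg12 V * (leg12 V)ᴴ * leg23 V = leg23 V * leg12 V * (leg12 V)ᴴ ∧
  leg12 V * (leg23 V)ᴴ * leg23 V = (leg23 V)ᴴ * leg23 V * leg12 V

/-- `λ(ω) = (ω ⊗ id)(V)`. -/
def lam (ω : Matrix n n ℂ →ₗ[ℂ] ℂ) (V : Matrix (n × n) (n × n) ℂ) : Matrix n n ℂ :=
  Matrix.of fun i j => ω (Matrix.of fun a b => V (a, i) (b, j))

/-- `ρ(ω) = (id ⊗ ω)(V)`. -/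
def rho (ω : Matrix n n ℂ →ₗ[ℂ] ℂ) (V : Matrix (n × n) (n × n) ℂ) : Matrix n n ℂ :=
  Matrix.of fun i j => ω (Matrix.of fun a b => V (i, a) (j, b))

/-- `1 ⊗ X` on `H ⊗ H`. -/
def oneTensor (X : Matrix n n ℂ) : Matrix (n × n) (n × n) ℂ :=
  Matrix.of fun p q => (if p.1 = q.1 then (1 : ℂ) else 0) * X p.2 q.2

/-- `X ⊗ 1` on `H ⊗ H`. -/
def tensorOne (X : Matrix n n ℂ) : Matrix (n × n) (n × n) ℂ :=
  Matrix.of fun p q => X p.1 q.1 * (if p.2 = q.2 then (1 : ℂ) else 0)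

/-- `Δ(X) = V (X ⊗ 1) V*`. -/
def Delta (V : Matrix (n × n) (n × n) ℂ) (X : Matrix n n ℂ) : Matrix (n × n) (n × n) ℂ :=
  V * tensorOne X * Vᴴ

/-- `Δ̂(X) = V* (1 ⊗ X) V`. -/
def hatDelta (V : Matrix (n × n) (n × n) ℂ) (X : Matrix n n ℂ) : Matrix (n × n) (n × n) ℂ :=
  Vᴴ * oneTensor X * V

/-- `(ω ⊗ ω')(W)` for an operator `W` on `H ⊗ H`. -/
def applyBoth (ω ω' : Matrix n n ℂ →ₗ[ℂ] ℂ) (W : Matrix (n × n) (n × n) ℂ) : ℂ :=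
  ω (Matrix.of fun i j => ω' (Matrix.of fun k l => W (i, k) (j, l)))

end

section

variable {m : Type*} (ω : Matrix m m ℂ →ₗ[ℂ] ℂ)

@[simp]
theorem map_of_sum {ι : Type*} (s : Finset ι) (f : ι → m → m → ℂ) :
    ω (of fun k l => ∑ x ∈ s, f x k l) = ∑ x ∈ s, ω (of fun k l => f x k l) := by
  rw [← map_sum]
  congr 1
  ext
  simp [Matrix.sum_apply]

@[simp]
theorem map_of_const_mul (c : ℂ) (f : m → m → ℂ) :
    ω (of fun k l => c * f k l) = c * ω (of fun k l => f k l) := by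
  rw [← smul_eq_mul, ← map_smul]
  rfl

@[simp]
theorem map_of_mul_const (c : ℂ) (f : m → m → ℂ) :
    ω (of fun k l => f k l * c) = ω (of fun k l => f k l) * c := by
  simp_rw [mul_comm _ c]
  exact map_of_const_mul ω c f

variable [Fintype m] [DecidableEq m]

theorem exists_eq_sum_mul :
    ∃ M : Matrix m m ℂ, ∀ X, ω X = ∑ p : m × m, X p.1 p.2 * M p.1 p.2 := by
  refine ⟨of fun a b => ω (single a b 1), fun X => ?_⟩
  conv_lhs => rw [matrix_eq_sum_single X]
  simp only [map_sum, of_apply, Fintype.sum_prod_type]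
  refine Finset.sum_congr rfl fun a _ => Finset.sum_congr rfl fun b _ => ?_
  rw [← smul_eq_mul, ← map_smul, smul_single, smul_eq_mul, mul_one]

theorem map_of_map_of_comm (ω' : Matrix m m ℂ →ₗ[ℂ] ℂ) (f : m → m → m → m → ℂ) :
    ω (of fun a b => ω' (of fun k l => f a b k l))
      = ω' (of fun k l => ω (of fun a b => f a b k l)) := by
  obtain ⟨M, hM⟩ := exists_eq_sum_mul ω
  obtain ⟨M', hM'⟩ := exists_eq_sum_mul ω'
  simp only [hM, hM', of_apply, Finset.sum_mul]
  rw [Finset.sum_comm]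
  exact Finset.sum_congr rfl fun _ _ => Finset.sum_congr rfl fun _ _ => by ring

end

theorem leg12_mul (A B : Matrix (n × n) (n × n) ℂ) : leg12 (A * B) = leg12 A * leg12 B := by
  ext ⟨a, i, k⟩ ⟨b, j, l⟩
  simp [leg12, mul_apply, Fintype.sum_prod_type, ite_mul, mul_ite]

theorem leg23_mul (A B : Matrix (n × n) (n × n) ℂ) : leg23 (A * B) = leg23 A * leg23 B := by
  ext ⟨a, i, k⟩ ⟨b, j, l⟩
  simp [leg23, mul_apply, Fintype.sum_prod_type, Finset.mul_sum, ite_mul, mul_ite]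

omit [Fintype n] in
theorem leg12_conjTranspose (A : Matrix (n × n) (n × n) ℂ) : leg12 Aᴴ = (leg12 A)ᴴ := by
  ext ⟨a, i, k⟩ ⟨b, j, l⟩
  simp [leg12, apply_ite (star : ℂ → ℂ), eq_comm]

omit [Fintype n] in
theorem leg23_conjTranspose (A : Matrix (n × n) (n × n) ℂ) : leg23 Aᴴ = (leg23 A)ᴴ := by
  ext ⟨a, i, k⟩ ⟨b, j, l⟩
  simp [leg23, apply_ite (star : ℂ → ℂ), eq_comm]

theorem lam_mul (ω : Matrix n n ℂ →ₗ[ℂ] ℂ) (W : Matrix (n × n) (n × n) ℂ) (X : Matrix n n ℂ) :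
    lam ω W * X = lam ω (W * oneTensor X) := by
  ext i j
  simp [lam, mul_apply, oneTensor, Fintype.sum_prod_type, ite_mul, mul_ite]

theorem mul_rho (ω : Matrix n n ℂ →ₗ[ℂ] ℂ) (X : Matrix n n ℂ) (W : Matrix (n × n) (n × n) ℂ) :
    X * rho ω W = rho ω (tensorOne X * W) := by
  ext i j
  simp [rho, mul_apply, tensorOne, Fintype.sum_prod_type, ite_mul, mul_ite]

/-- `(id ⊗ id ⊗ ω)(T)` -/
def sliceThird (ω : Matrix n n ℂ →ₗ[ℂ] ℂ) (T : Matrix (n × n × n) (n × n × n) ℂ) :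
    Matrix (n × n) (n × n) ℂ :=
  of fun p q => ω (of fun k l => T (p.1, p.2, k) (q.1, q.2, l))

/-- `(ω ⊗ id ⊗ id)(T)` -/
def sliceFirst (ω : Matrix n n ℂ →ₗ[ℂ] ℂ) (T : Matrix (n × n × n) (n × n × n) ℂ) :
    Matrix (n × n) (n × n) ℂ :=
  of fun p q => ω (of fun a b => T (a, p.1, p.2) (b, q.1, q.2))

section

variable (ω ω' : Matrix n n ℂ →ₗ[ℂ] ℂ) (A B C : Matrix (n × n) (n × n) ℂ)

theorem sliceThird_leg12_mul_leg23_mul_leg12 :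
    sliceThird ω (leg12 A * leg23 B * leg12 C) = A * oneTensor (rho ω B) * C := by
  ext ⟨a, i⟩ ⟨b, j⟩
  simp [sliceThird, rho, mul_apply, leg12, leg23, oneTensor, Fintype.sum_prod_type,
    Finset.sum_mul, ite_mul, mul_ite]

theorem sliceFirst_leg23_mul_leg12_mul_leg23 :
    sliceFirst ω (leg23 A * leg12 B * leg23 C) = A * tensorOne (lam ω B) * C := by
  ext ⟨a, i⟩ ⟨b, j⟩
  simp [sliceFirst, lam, mul_apply, leg12, leg23, tensorOne, Fintype.sum_prod_type,
    Finset.sum_mul, ite_mul, mul_ite]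

theorem lam_sliceThird_leg13_mul_leg23 :
    lam ω' (sliceThird ω (leg13 A * leg23 B)) = rho ω (oneTensor (lam ω' A) * B) := by
  ext i j
  simp [sliceThird, lam, rho, mul_apply, leg13, leg23, oneTensor, Fintype.sum_prod_type,
    ite_mul, mul_ite, map_of_map_of_comm ω']

theorem rho_sliceFirst_leg12_mul_leg13 :
    rho ω (sliceFirst ω' (leg12 A * leg13 B)) = lam ω' (A * tensorOne (rho ω B)) := by
  ext i j
  simp [sliceFirst, lam, rho, mul_apply, leg12, leg13, tensorOne, Fintype.sum_prod_type,
    ite_mul, mul_ite, map_of_map_of_comm ω]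

end

section

variable {V : Matrix (n × n) (n × n) ℂ}

theorem oneTensor_lam_mul_eq_self {e : Matrix n n ℂ →ₗ[ℂ] ℂ}
    (h : ∀ ω, lam e V * lam ω V = lam ω V) : oneTensor (lam e V) * V = V := by
  ext ⟨i, k⟩ ⟨j, l⟩
  simpa [lam, oneTensor, mul_apply, Fintype.sum_prod_type, ite_mul] using
    congr_fun₂ (h (entryLinearMap ℂ ℂ i j)) k l

theorem mul_oneTensor_lam_eq_self {e : Matrix n n ℂ →ₗ[ℂ] ℂ}
    (h : ∀ ω, lam ω V * lam e V = lam ω V) : V * oneTensor (lam e V) = V := by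
  ext ⟨i, k⟩ ⟨j, l⟩
  simpa [lam, oneTensor, mul_apply, Fintype.sum_prod_type, mul_ite] using
    congr_fun₂ (h (entryLinearMap ℂ ℂ i j)) k l

theorem tensorOne_rho_mul_eq_self {e : Matrix n n ℂ →ₗ[ℂ] ℂ}
    (h : ∀ ω, rho e V * rho ω V = rho ω V) : tensorOne (rho e V) * V = V := by
  ext ⟨i, k⟩ ⟨j, l⟩
  simpa [rho, tensorOne, mul_apply, Fintype.sum_prod_type, ite_mul] using
    congr_fun₂ (h (entryLinearMap ℂ ℂ k l)) i j

theorem mul_tensorOne_rho_eq_self {e : Matrix n n ℂ →ₗ[ℂ] ℂ}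
    (h : ∀ ω, rho ω V * rho e V = rho ω V) : V * tensorOne (rho e V) = V := by
  ext ⟨i, k⟩ ⟨j, l⟩
  simpa [rho, tensorOne, mul_apply, Fintype.sum_prod_type, mul_ite] using
    congr_fun₂ (h (entryLinearMap ℂ ℂ k l)) i j

namespace IsMPI

variable (hV : IsMPI V)
include hV

theorem leg23_mul_leg12_mul_leg23_conjTranspose :
    leg23 V * leg12 V * (leg23 V)ᴴ = leg12 V * leg13 V := by
  obtain ⟨hPI, hPent, hHex, -, -⟩ := hV
  calc leg23 V * leg12 V * (leg23 V)ᴴ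
      = leg12 V * (leg13 V * leg23 V * (leg23 V)ᴴ) := by rw [hPent]; simp only [mul_assoc]
    _ = leg12 (V * Vᴴ * V) * leg13 V := by
        rw [hHex, leg12_mul, leg12_mul, leg12_conjTranspose]; simp only [mul_assoc]
    _ = leg12 V * leg13 V := by rw [hPI]

theorem leg12_conjTranspose_mul_leg23_mul_leg12 :
    (leg12 V)ᴴ * leg23 V * leg12 V = leg13 V * leg23 V := by
  obtain ⟨hPI, hPent, hHex, -, -⟩ := hV
  calc (leg12 V)ᴴ * leg23 V * leg12 V
      = (leg12 V)ᴴ * leg12 V * leg13 V * leg23 V := by rw [mul_assoc, hPent]; simp only [mul_assoc]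
    _ = leg13 V * leg23 (V * Vᴴ * V) := by
        rw [← hHex, leg23_mul, leg23_mul, leg23_conjTranspose]; simp only [mul_assoc]
    _ = leg13 V * leg23 V := by rw [hPI]

theorem lam_hatDelta_rho {ω ω' : Matrix n n ℂ →ₗ[ℂ] ℂ} (h : oneTensor (lam ω' V) * V = V) :
    lam ω' (hatDelta V (rho ω V)) = rho ω V := by
  rw [hatDelta, ← sliceThird_leg12_mul_leg23_mul_leg12, leg12_conjTranspose,
    hV.leg12_conjTranspose_mul_leg23_mul_leg12, lam_sliceThird_leg13_mul_leg23, h]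

theorem rho_Delta_lam {ω ω' : Matrix n n ℂ →ₗ[ℂ] ℂ} (h : V * tensorOne (rho ω V) = V) :
    rho ω (Delta V (lam ω' V)) = lam ω' V := by
  rw [Delta, ← sliceFirst_leg23_mul_leg12_mul_leg23, leg23_conjTranspose,
    hV.leg23_mul_leg12_mul_leg23_conjTranspose, rho_sliceFirst_leg12_mul_leg13, h]

theorem lam_eq_rho {ε ε' : Matrix n n ℂ →ₗ[ℂ] ℂ}
    (hS₁ : oneTensor (lam ε' V) * V = V) (hS₂ : V * oneTensor (lam ε' V) = V)
    (hT₁ : tensorOne (rho ε V) * V = V) (hT₂ : V * tensorOne (rho ε V) = V) :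
    lam ε' V = rho ε V := by
  have hrho : rho ε V * lam ε' V = rho ε V := by
    conv_lhs => rw [← hV.lam_hatDelta_rho hS₁]
    rw [lam_mul, hatDelta, mul_assoc _ V, hS₂, ← hatDelta, hV.lam_hatDelta_rho hS₁]
  have hlam : rho ε V * lam ε' V = lam ε' V := by
    conv_lhs => rw [← hV.rho_Delta_lam hT₂]
    rw [mul_rho, Delta, ← mul_assoc, ← mul_assoc, hT₁, ← Delta, hV.rho_Delta_lam hT₂]
  exact hlam.symm.trans hrho

end IsMPI

end

theorem statement12 (V : Matrix (n × n) (n × n) ℂ) (hV : IsMPI V)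
    (ε εhat : Matrix n n ℂ →ₗ[ℂ] ℂ)
    (hεhat : ∀ ω : Matrix n n ℂ →ₗ[ℂ] ℂ,
      lam εhat V * lam ω V = lam ω V ∧ lam ω V * lam εhat V = lam ω V)
    (hε : ∀ ω : Matrix n n ℂ →ₗ[ℂ] ℂ,
      rho ε V * rho ω V = rho ω V ∧ rho ω V * rho ε V = rho ω V) :
    Delta V (lam εhat V) = V * Vᴴ ∧ hatDelta V (rho ε V) = Vᴴ * V := by
  have hS₁ := oneTensor_lam_mul_eq_self fun ω => (hεhat ω).1
  have hS₂ := mul_oneTensor_lam_eq_self fun ω => (hεhat ω).2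
  have hT₁ := tensorOne_rho_mul_eq_self fun ω => (hε ω).1
  have hT₂ := mul_tensorOne_rho_eq_self fun ω => (hε ω).2
  have hunit : lam εhat V = rho ε V := hV.lam_eq_rho hS₁ hS₂ hT₁ hT₂
  constructor
  · rw [Delta, hunit, hT₂]
  · rw [hatDelta, ← hunit, mul_assoc, hS₁]

end MPIpaper
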